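/- One-step simulation of Φ-rewriting by the lambda calculus: if t is a canonical Φ-term and t → u in Φ, then ⌈t⌉ →v ⌈u⌉ under weak call-by-value reduction. -/

import Mathlib

/-- Pure untyped λ-terms with named variables. -/
inductive Tm : Type
  | var : ℕ → Tm
  | lam : ℕ → Tm → Tm
  | app : Tm → Tm → Tm
deriving DecidableEq

namespace Tm

/-- Free variables. -/
def fv : Tm → Finset ℕ
  | var x => {x}
  | lam x M => fv M \ {x}
  | app M N => fv M ∪ fv N

/-- A term is closed when it has no free variables. -/
def Closed (M : Tm) : Prop := fv M = ∅

/-- Values: variables and abstractions. -/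
def IsValue : Tm → Prop
  | var _ => True
  | lam _ _ => True
  | app _ _ => False

/-- (Naive) substitution `M{N/x}`. -/
def subst : Tm → ℕ → Tm → Tm
  | var y, x, N => if y = x then N else var y
  | lam y P, x, N => if y = x then lam y P else lam y (subst P x N)
  | app P Q, x, N => app (subst P x N) (subst Q x N)

/-- Weak call-by-value reduction: β-redexes whose argument is a value,
closed under both application contexts, never under λ. -/
inductive Cbv : Tm → Tm → Prop
  | beta {x M V} : IsValue V → Cbv (app (lam x M) V) (subst M x V)
  | appL {M N L} : Cbv M N → Cbv (app M L) (app N L)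
  | appR {M N L} : Cbv M N → Cbv (app L M) (app L N)

/-- The subterm relation on λ-terms. -/
inductive Sub : Tm → Tm → Prop
  | refl (M) : Sub M M
  | lam {M N x} : Sub M N → Sub M (lam x N)
  | appL {M N L} : Sub M N → Sub M (app N L)
  | appR {M N L} : Sub M L → Sub M (app N L)

end Tm

/-- `M N₁ … Nₖ` (left-nested application). -/
def appList : Tm → List Tm → Tm := List.foldl Tm.app

/-- `λx₁.…λxₖ.M`. -/
def lams : List ℕ → Tm → Tm := fun xs M => xs.foldr Tm.lam M

/-- `stepsN R n a b`: `a` reduces to `b` in exactly `n` `R`-steps. -/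
def stepsN {α : Type*} (R : α → α → Prop) : ℕ → α → α → Prop
  | 0, a, b => a = b
  | n + 1, a, b => ∃ c, R a c ∧ stepsN R n c b

/-- `a` is an `R`-normal form. -/
def NormalForm {α : Type*} (R : α → α → Prop) (a : α) : Prop := ¬ ∃ b, R a b

/-- Terms of the constructor rewrite system Φ: variables, the binary function
symbol `app`, and a constructor `c_{x,M}` for each variable `x` and λ-term `M`. -/
inductive PTm : Type
  | pvar : ℕ → PTm
  | papp : PTm → PTm → PTm
  | con : ℕ → Tm → List PTm → PTm

namespace PTm

/-- The (sorted) list of free variables of a λ-term. -/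
def fvList (M : Tm) : List ℕ := (Tm.fv M).sort (· ≤ ·)

/-- The translation `⌊·⌋` from λ-terms to Φ-terms. -/
def toP : Tm → PTm
  | .var x => pvar x
  | .lam x M => con x M ((fvList (Tm.lam x M)).map pvar)
  | .app M N => papp (toP M) (toP N)

/-- Simultaneous (sequential, for closed arguments) λ-substitution `M{Nᵢ/xᵢ}`. -/
def substList (M : Tm) (xs : List ℕ) (Ns : List Tm) : Tm :=
  (xs.zip Ns).foldl (fun acc p => Tm.subst acc p.1 p.2) M

/-- The readback `⌈·⌉` from Φ-terms to λ-terms. -/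
def toL : PTm → Tm
  | pvar x => .var x
  | papp u v => .app (toL u) (toL v)
  | con x M ts =>
      substList (Tm.lam x M) (fvList (Tm.lam x M)) (ts.attach.map fun t => toL t.1)
termination_by t => sizeOf t
decreasing_by all_goals first
  | (simp_wf; have := List.sizeOf_lt_of_mem t.2; omega)
  | (simp_wf; omega)
  | simp_wf

/-- First-order substitution on Φ-terms. -/
def psubst : PTm → ℕ → PTm → PTm
  | pvar y, x, N => if y = x then N else pvar y
  | papp u v, x, N => papp (psubst u x N) (psubst v x N)
  | con y M ts, x, N => con y M (ts.attach.map fun t => psubst t.1 x N)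
termination_by t _ _ => sizeOf t
decreasing_by all_goals first
  | (simp_wf; have := List.sizeOf_lt_of_mem t.2; omega)
  | (simp_wf; omega)
  | simp_wf

/-- Simultaneous (sequential, for ground arguments) substitution on Φ-terms. -/
def psubstList (t : PTm) (xs : List ℕ) (us : List PTm) : PTm :=
  (xs.zip us).foldl (fun acc p => psubst acc p.1 p.2) t

/-- Constructor terms of Φ: ground terms built from constructors only. -/
inductive IsConT : PTm → Prop
  | con {x M ts} : (∀ t ∈ ts, IsConT t) → IsConT (con x M ts)

/-- Well-formed Φ-terms: every constructor `c_{x,M}` gets exactly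
`|FV(λx.M)|` arguments. -/
inductive WF : PTm → Prop
  | pvar (x) : WF (pvar x)
  | papp {u v} : WF u → WF v → WF (papp u v)
  | con {x M ts} : ts.length = (fvList (Tm.lam x M)).length →
      (∀ t ∈ ts, WF t) → WF (con x M ts)

/-- Canonical closed Φ-terms: constructor terms, or `app` of canonical terms. -/
inductive Canonical : PTm → Prop
  | ofCon {t} : IsConT t → Canonical t
  | papp {u v} : Canonical u → Canonical v → Canonical (papp u v)

/-- Call-by-value rewriting in Φ: the rules are
`app(c_{x,M}(x₁,…,xₙ), x) → ⌊M⌋` (with `FV(λx.M) = x₁,…,xₙ`), matched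
variables are instantiated by constructor terms, and rewriting is closed
under arbitrary contexts. -/
inductive Step : PTm → PTm → Prop
  | beta {x : ℕ} {M : Tm} {ts : List PTm} {v : PTm} :
      (∀ t ∈ ts, IsConT t) → IsConT v →
      ts.length = (fvList (Tm.lam x M)).length →
      Step (papp (con x M ts) v)
        (psubstList (toP M) (fvList (Tm.lam x M) ++ [x]) (ts ++ [v]))
  | appL {u u' v} : Step u u' → Step (papp u v) (papp u' v)
  | appR {u v v'} : Step v v' → Step (papp u v) (papp u v')
  | conArg {x M t t' l r} : Step t t' →
      Step (con x M (l ++ t :: r)) (con x M (l ++ t' :: r))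

/-- Variables occurring in a Φ-term. -/
def pvarsOf : PTm → Finset ℕ
  | pvar x => {x}
  | papp u v => pvarsOf u ∪ pvarsOf v
  | con _ _ ts => ts.attach.foldr (fun t s => pvarsOf t.1 ∪ s) ∅
termination_by t => sizeOf t
decreasing_by all_goals first
  | (simp_wf; have := List.sizeOf_lt_of_mem t.2; omega)
  | (simp_wf; omega)
  | simp_wf

/-- The subterm relation on Φ-terms. -/
inductive PSub : PTm → PTm → Prop
  | refl (t) : PSub t t
  | appL {t u v} : PSub t u → PSub t (papp u v)
  | appR {t u v} : PSub t v → PSub t (papp u v)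
  | conArg {t u x M ts} : u ∈ ts → PSub t u → PSub t (con x M ts)

end PTm

/-!
The readback of a well-formed constructor term is a closed abstraction, hence a value. So a
root step `app(c_{x,M}(ts), v) → ⌊M⌋[ts/FV(λx.M), v/x]` reads back to the call-by-value
β-step `(λx. M{⌈ts⌉/FV(λx.M)}) ⌈v⌉ → M{⌈ts⌉/FV(λx.M)}{⌈v⌉/x}`, once we know that readback
commutes with substituting closed constructor terms. That commutation is proved along the
sequential substitution, every intermediate term being `⌊M⌋` with some variables replaced by
closed constructor terms; the closedness is what lets the naive substitutions commute. Steps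
below `app` are mirrored by the context rules, and canonicity excludes steps inside
constructors, which weak reduction cannot follow under λ.
-/

namespace Tm

theorem Closed.notMem_fv {N : Tm} (h : N.Closed) (a : ℕ) : a ∉ N.fv := by
  simp [show N.fv = ∅ from h]

theorem subst_eq_self_of_notMem_fv {M : Tm} {x : ℕ} (N : Tm) (h : x ∉ M.fv) :
    M.subst x N = M := by
  induction M with
  | var y => grind [subst, fv]
  | lam y P ih =>
    by_cases hy : y = x
    · simp [subst, hy]
    · simp_all [subst, fv, Ne.symm hy]
  | app P Q ih₁ ih₂ => simp_all [subst, fv]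

theorem Closed.subst_eq {N : Tm} (h : N.Closed) (x : ℕ) (M : Tm) : N.subst x M = N :=
  subst_eq_self_of_notMem_fv M (h.notMem_fv x)

theorem fv_subst_subset (M : Tm) (x : ℕ) (N : Tm) : (M.subst x N).fv ⊆ M.fv.erase x ∪ N.fv := by
  induction M with
  | var y => by_cases hy : y = x <;> simp [subst, fv, hy]
  | lam y P ih =>
    by_cases hy : y = x
    · simp [subst, fv, hy]
    · intro a; simp [subst, fv, hy]; grind
  | app P Q ih₁ ih₂ => intro a; simp [subst, fv]; grind

theorem subst_var_self (M : Tm) (x : ℕ) : M.subst x (.var x) = M := by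
  induction M with
  | var y => by_cases hy : y = x <;> simp [subst, hy]
  | lam y P ih => by_cases hy : y = x <;> simp [subst, hy, ih]
  | app P Q ih₁ ih₂ => simp [subst, ih₁, ih₂]

theorem subst_comm {M N P : Tm} {x y : ℕ} (hxy : x ≠ y) (hN : y ∉ N.fv) (hP : x ∉ P.fv) :
    (M.subst x N).subst y P = (M.subst y P).subst x N := by
  induction M with
  | var z =>
    by_cases hzx : z = x
    · simp [subst, hzx, hxy, subst_eq_self_of_notMem_fv _ hN]
    · by_cases hzy : z = y <;> simp [subst, hzx, hzy, hxy.symm, subst_eq_self_of_notMem_fv _ hP]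
  | lam z Q ih => by_cases hzx : z = x <;> by_cases hzy : z = y <;> simp_all [subst]
  | app Q R ih₁ ih₂ => simp [subst, ih₁, ih₂]

end Tm

theorem List.Forall₂.exists_of_mem_right {α β : Type*} {R : α → β → Prop} {l₁ : List α}
    {l₂ : List β} (h : List.Forall₂ R l₁ l₂) {b : β} (hb : b ∈ l₂) : ∃ a ∈ l₁, R a b := by
  induction h with
  | nil => simp at hb
  | cons hab _ ih =>
    rcases List.mem_cons.mp hb with rfl | hb
    · exact ⟨_, List.mem_cons_self, hab⟩
    · obtain ⟨a, ha, hr⟩ := ih hb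
      exact ⟨a, List.mem_cons_of_mem _ ha, hr⟩

namespace PTm

section substList

variable {M C : Tm} {y : ℕ} {xs : List ℕ} {Bs : List Tm}

@[simp] theorem substList_nil_left (M : Tm) (Bs : List Tm) : substList M [] Bs = M := rfl

@[simp] theorem substList_nil_right (M : Tm) (xs : List ℕ) : substList M xs [] = M := by
  simp [substList]

@[simp] theorem substList_cons_cons (M : Tm) (x : ℕ) (xs : List ℕ) (B : Tm) (Bs : List Tm) :
    substList M (x :: xs) (B :: Bs) = substList (M.subst x B) xs Bs := rfl

theorem substList_append_singleton (M : Tm) (h : xs.length = Bs.length) (x : ℕ) (B : Tm) :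
    substList M (xs ++ [x]) (Bs ++ [B]) = (substList M xs Bs).subst x B := by
  rw [substList, List.zip_append h, List.foldl_append]
  rfl

theorem substList_lam {z : ℕ} (M : Tm) (Bs : List Tm) (hz : z ∉ xs) :
    substList (.lam z M) xs Bs = .lam z (substList M xs Bs) := by
  induction xs generalizing M Bs with
  | nil => rfl
  | cons w xs ih =>
    cases Bs with
    | nil => rfl
    | cons B Bs =>
      rw [List.mem_cons, not_or] at hz
      simp [Tm.subst, hz.1, ih _ _ hz.2]

theorem substList_map_var (M : Tm) (xs : List ℕ) : substList M xs (xs.map .var) = M := by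
  induction xs generalizing M with
  | nil => rfl
  | cons w xs ih => simp [Tm.subst_var_self, ih]

theorem notMem_fv_substList (hM : y ∉ M.fv) (hB : ∀ B ∈ Bs, y ∉ B.fv) :
    y ∉ (substList M xs Bs).fv := by
  induction xs generalizing M Bs with
  | nil => exact hM
  | cons w xs ih =>
    cases Bs with
    | nil => exact hM
    | cons B Bs =>
      simp only [List.mem_cons, forall_eq_or_imp] at hB
      refine ih (fun hy => ?_) hB.2
      have := Tm.fv_subst_subset M w B hy
      simp_all

theorem fv_substList_subset (hlen : xs.length = Bs.length) (hB : ∀ B ∈ Bs, B.Closed) :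
    (substList M xs Bs).fv ⊆ M.fv \ xs.toFinset := by
  induction xs generalizing M Bs with
  | nil => simp
  | cons w xs ih =>
    cases Bs with
    | nil => simp at hlen
    | cons B Bs =>
      simp only [List.mem_cons, forall_eq_or_imp] at hB
      intro a ha
      have ha' := ih (M := M.subst w B) (by simpa using hlen) hB.2 ha
      have := Tm.fv_subst_subset M w B (Finset.mem_sdiff.mp ha').1
      simp_all [hB.1.notMem_fv]

theorem substList_subst_comm (hy : y ∉ xs) (hB : ∀ B ∈ Bs, y ∉ B.fv) (hC : C.Closed) :
    (substList M xs Bs).subst y C = substList (M.subst y C) xs Bs := by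
  induction xs generalizing M Bs with
  | nil => rfl
  | cons w xs ih =>
    cases Bs with
    | nil => rfl
    | cons B Bs =>
      simp only [List.mem_cons, not_or, forall_eq_or_imp] at hy hB
      rw [substList_cons_cons, substList_cons_cons, ih hy.2 hB.2,
        Tm.subst_comm (Ne.symm hy.1) hB.1 (hC.notMem_fv w)]

abbrev VarOrClosed (xs : List ℕ) (Bs : List Tm) : Prop :=
  List.Forall₂ (fun w B => B = .var w ∨ B.Closed) xs Bs

theorem VarOrClosed.notMem_fv (hB : VarOrClosed xs Bs) (hy : y ∉ xs) :
    ∀ B ∈ Bs, y ∉ B.fv := by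
  intro B hB'
  obtain ⟨w, hw, rfl | hcl⟩ := hB.exists_of_mem_right hB'
  · simp only [Tm.fv, Finset.mem_singleton]
    rintro rfl
    exact hy hw
  · exact hcl.notMem_fv y

theorem subst_substList (hnd : xs.Nodup) (hy : y ∈ xs) (hB : VarOrClosed xs Bs)
    (hC : C.Closed) :
    (substList M xs Bs).subst y C = substList M xs (Bs.map (Tm.subst · y C)) := by
  induction hB generalizing M with
  | nil => simp at hy
  | @cons w B xs Bs hwB hB ih =>
    rw [List.nodup_cons] at hnd
    rw [List.map_cons, substList_cons_cons, substList_cons_cons]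
    by_cases hwy : w = y
    · subst hwy
      have hBs := VarOrClosed.notMem_fv hB hnd.1
      rw [(List.map_congr_left fun B hB => Tm.subst_eq_self_of_notMem_fv C (hBs B hB)).trans
        (List.map_id Bs)]
      rcases hwB with rfl | hcl
      · simp [Tm.subst_var_self, Tm.subst, substList_subst_comm hnd.1 hBs hC]
      · have hw : w ∉ (M.subst w B).fv := fun h => by
          simpa [hcl.notMem_fv w] using Tm.fv_subst_subset M w B h
        rw [hcl.subst_eq, Tm.subst_eq_self_of_notMem_fv _ (notMem_fv_substList hw hBs)]
    · have hBy : B.subst y C = B := by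
        rcases hwB with rfl | hcl
        · simp [Tm.subst, hwy]
        · exact hcl.subst_eq y C
      rw [hBy, ih hnd.2 ((List.mem_cons.mp hy).resolve_left (Ne.symm hwy))]

end substList

theorem mem_fvList {w : ℕ} {M : Tm} : w ∈ fvList M ↔ w ∈ M.fv := Finset.mem_sort _

theorem nodup_fvList (M : Tm) : (fvList M).Nodup := Finset.sort_nodup _ _

theorem self_notMem_fvList_lam (x : ℕ) (M : Tm) : x ∉ fvList (.lam x M) := by
  simp [mem_fvList, Tm.fv]

theorem toL_pvar (x : ℕ) : toL (pvar x) = .var x := by rw [toL]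

theorem toL_papp (a b : PTm) : toL (papp a b) = .app (toL a) (toL b) := by rw [toL]

theorem toL_con (z : ℕ) (N : Tm) (ts : List PTm) :
    toL (con z N ts) = substList (.lam z N) (fvList (.lam z N)) (ts.map toL) := by
  rw [toL, List.attach_map_val]

theorem toL_con_eq_lam (z : ℕ) (N : Tm) (ts : List PTm) :
    toL (con z N ts) = .lam z (substList N (fvList (.lam z N)) (ts.map toL)) := by
  rw [toL_con, substList_lam _ _ (self_notMem_fvList_lam z N)]

theorem toL_toP (M : Tm) : toL (toP M) = M := by
  induction M with
  | var x => rw [toP, toL_pvar]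
  | lam x M _ => rw [toP, toL_con, List.map_map, show toL ∘ pvar = .var from funext toL_pvar,
      substList_map_var]
  | app M N ih₁ ih₂ => rw [toP, toL_papp, ih₁, ih₂]

theorem psubst_pvar (w x : ℕ) (u : PTm) :
    psubst (pvar w) x u = if w = x then u else pvar w := by rw [psubst]

theorem psubst_papp (a b : PTm) (x : ℕ) (u : PTm) :
    psubst (papp a b) x u = papp (psubst a x u) (psubst b x u) := by rw [psubst]

theorem psubst_con (z : ℕ) (N : Tm) (ts : List PTm) (x : ℕ) (u : PTm) :
    psubst (con z N ts) x u = con z N (ts.map (psubst · x u)) := by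
  rw [psubst, List.attach_map_val (f := (psubst · x u))]

@[simp] theorem psubstList_nil_right (t : PTm) (xs : List ℕ) : psubstList t xs [] = t := by
  simp [psubstList]

@[simp] theorem psubstList_cons_cons (t : PTm) (x : ℕ) (xs : List ℕ) (u : PTm) (us : List PTm) :
    psubstList t (x :: xs) (u :: us) = psubstList (psubst t x u) xs us := rfl

theorem IsConT.psubst_eq {s : PTm} (h : IsConT s) (y : ℕ) (u : PTm) : psubst s y u = s := by
  induction h with
  | @con z N ts _ ih =>
    rw [psubst_con, (List.map_congr_left ih).trans (List.map_id ts)]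

theorem IsConT.isValue_toL {t : PTm} (h : IsConT t) : (toL t).IsValue := by
  obtain ⟨⟩ := h
  rw [toL_con_eq_lam]
  trivial

theorem IsConT.closed_toL {t : PTm} (hc : IsConT t) (hwf : WF t) : (toL t).Closed := by
  induction hc with
  | @con z N ts _ ih =>
    obtain _ | _ | ⟨hlen, hwf⟩ := hwf
    have hsub := fv_substList_subset (M := .lam z N) (Bs := ts.map toL)
      (by simpa using hlen.symm) (by simpa using fun s hs => ih s hs (hwf s hs))
    rw [fvList, Finset.sort_toFinset, Finset.sdiff_self] at hsub
    rw [toL_con]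
    exact Finset.subset_empty.mp hsub

theorem Step.not_isConT {t u : PTm} (h : Step t u) : ¬ IsConT t := by
  induction h with
  | beta | appL | appR => rintro ⟨⟩
  | conArg _ ih =>
    rintro ⟨hts⟩
    exact ih (hts _ (by simp))

abbrev VarOrConT (xs : List ℕ) (ts : List PTm) : Prop :=
  List.Forall₂ (fun w t => t = pvar w ∨ (IsConT t ∧ WF t)) xs ts

theorem VarOrConT.map_toL {xs : List ℕ} {ts : List PTm} (h : VarOrConT xs ts) :
    VarOrClosed xs (ts.map toL) := by
  rw [VarOrClosed, List.forall₂_map_right_iff]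
  refine h.imp ?_
  rintro w s (rfl | ⟨hs, hwf⟩)
  · exact .inl (toL_pvar w)
  · exact .inr (hs.closed_toL hwf)

/-- `⌊M⌋` with some of its variables replaced by well-formed constructor terms. -/
inductive PartialInstance : PTm → Prop
  | pvar (x : ℕ) : PartialInstance (pvar x)
  | papp {u v} : PartialInstance u → PartialInstance v → PartialInstance (papp u v)
  | con {z N ts} : VarOrConT (fvList (.lam z N)) ts → PartialInstance (con z N ts)

theorem partialInstance_toP (M : Tm) : PartialInstance (toP M) := by
  induction M with
  | var x => exact .pvar x
  | lam x M _ =>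
    refine .con ?_
    rw [VarOrConT, List.forall₂_map_right_iff]
    exact List.forall₂_same.mpr fun w _ => .inl rfl
  | app M N ih₁ ih₂ => exact .papp ih₁ ih₂

theorem PartialInstance.of_isConT {t : PTm} (hc : IsConT t) (hwf : WF t) :
    PartialInstance t := by
  obtain @⟨z, N, ts, hts⟩ := hc
  obtain _ | _ | ⟨hlen, hwf⟩ := hwf
  refine .con (List.forall₂_iff_zip.mpr ⟨hlen.symm, fun {w s} hws => ?_⟩)
  have hs := (List.of_mem_zip hws).2
  exact .inr ⟨hts s hs, hwf s hs⟩

theorem PartialInstance.psubst {t u : PTm} (ht : PartialInstance t) (y : ℕ) (hu : IsConT u)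
    (hwf : WF u) : PartialInstance (psubst t y u) := by
  induction ht with
  | pvar x =>
    rw [psubst_pvar]
    split
    · exact .of_isConT hu hwf
    · exact .pvar x
  | papp _ _ ih₁ ih₂ => rw [psubst_papp]; exact .papp ih₁ ih₂
  | con hts =>
    rw [psubst_con]
    refine .con ?_
    rw [VarOrConT, List.forall₂_map_right_iff]
    refine hts.imp ?_
    rintro w s (rfl | ⟨hs, hwfs⟩)
    · rw [psubst_pvar]
      split
      · exact .inr ⟨hu, hwf⟩
      · exact .inl rfl
    · rw [hs.psubst_eq]
      exact .inr ⟨hs, hwfs⟩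

theorem toL_psubst_pvar (w y : ℕ) (u : PTm) :
    toL (psubst (pvar w) y u) = (Tm.var w).subst y (toL u) := by
  by_cases h : w = y <;> simp [psubst_pvar, toL_pvar, Tm.subst, h]

theorem toL_psubst_con {z : ℕ} {N : Tm} {ts : List PTm} (hts : VarOrConT (fvList (.lam z N)) ts)
    (y : ℕ) {u : PTm} (hu : IsConT u) (hwf : WF u) :
    toL (psubst (con z N ts) y u) = (toL (con z N ts)).subst y (toL u) := by
  by_cases hy : y ∈ fvList (.lam z N)
  · have hzy : z ≠ y := fun h => self_notMem_fvList_lam z N (h ▸ hy)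
    have hargs :
        (ts.map (psubst · y u)).map toL = (ts.map toL).map (Tm.subst · y (toL u)) := by
      simp only [List.map_map]
      refine List.map_congr_left fun s hs => ?_
      obtain ⟨w, -, rfl | ⟨hs, hwfs⟩⟩ := hts.exists_of_mem_right hs
      · simp [toL_psubst_pvar, toL_pvar]
      · simp [hs.psubst_eq, (hs.closed_toL hwfs).subst_eq]
    rw [psubst_con, toL_con_eq_lam, toL_con_eq_lam, hargs,
      ← subst_substList (nodup_fvList _) hy hts.map_toL (hu.closed_toL hwf), Tm.subst, if_neg hzy]
  · have hargs : ts.map (psubst · y u) = ts := by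
      refine (List.map_congr_left fun s hs => ?_).trans (List.map_id ts)
      obtain ⟨w, hw, rfl | ⟨hs, -⟩⟩ := hts.exists_of_mem_right hs
      · rw [psubst_pvar, if_neg (by rintro rfl; exact hy hw), id]
      · exact hs.psubst_eq y u
    have hyN : y ∉ (Tm.lam z N).fv := by rwa [mem_fvList] at hy
    rw [psubst_con, hargs, toL_con, Tm.subst_eq_self_of_notMem_fv _
      (notMem_fv_substList hyN (VarOrClosed.notMem_fv hts.map_toL hy))]

theorem toL_psubst {t : PTm} (ht : PartialInstance t) (y : ℕ) {u : PTm} (hu : IsConT u)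
    (hwf : WF u) : toL (psubst t y u) = (toL t).subst y (toL u) := by
  induction ht with
  | pvar w => rw [toL_psubst_pvar, toL_pvar]
  | papp _ _ ih₁ ih₂ => rw [psubst_papp, toL_papp, toL_papp, ih₁, ih₂]; rfl
  | con hts => exact toL_psubst_con hts y hu hwf

theorem toL_psubstList {t : PTm} (ht : PartialInstance t) (xs : List ℕ) {us : List PTm}
    (hus : ∀ u ∈ us, IsConT u ∧ WF u) :
    toL (psubstList t xs us) = substList (toL t) xs (us.map toL) := by
  induction xs generalizing t us with
  | nil => rfl
  | cons x xs ih =>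
    cases us with
    | nil => simp
    | cons u us =>
      simp only [List.mem_cons, forall_eq_or_imp] at hus
      rw [psubstList_cons_cons, List.map_cons, substList_cons_cons,
        ← toL_psubst ht x hus.1.1 hus.1.2]
      exact ih (ht.psubst x hus.1.1 hus.1.2) hus.2

theorem toL_contractum {x : ℕ} {M : Tm} {ts : List PTm} {v : PTm}
    (hts : ∀ t ∈ ts, IsConT t) (hwfts : ∀ t ∈ ts, WF t) (hv : IsConT v) (hwfv : WF v)
    (hlen : ts.length = (fvList (.lam x M)).length) :
    toL (psubstList (toP M) (fvList (.lam x M) ++ [x]) (ts ++ [v])) =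
      (substList M (fvList (.lam x M)) (ts.map toL)).subst x (toL v) := by
  have hus : ∀ u ∈ ts ++ [v], IsConT u ∧ WF u := by
    simpa [or_imp, forall_and] using ⟨⟨hts, hv⟩, hwfts, hwfv⟩
  rw [toL_psubstList (partialInstance_toP M) _ hus, toL_toP, List.map_append, List.map_singleton,
    substList_append_singleton _ (by simpa using hlen.symm)]

theorem Canonical.of_papp {u v : PTm} (h : Canonical (PTm.papp u v)) :
    Canonical u ∧ Canonical v := by
  obtain ⟨⟨⟩⟩ | ⟨hu, hv⟩ := h
  exact ⟨hu, hv⟩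

end PTm

/-- one-step simulation of Φ-rewriting by the λ-calculus:
if `t` is canonical and `t → u` in Φ, then `⌈t⌉ →v ⌈u⌉`. -/
theorem step_simulates (t u : PTm) (hwf : PTm.WF t) (hc : PTm.Canonical t)
    (h : PTm.Step t u) : Tm.Cbv (PTm.toL t) (PTm.toL u) := by
  induction h with
  | beta hts hv hlen =>
    obtain _ | ⟨_ | _ | ⟨-, hwfts⟩, hwfv⟩ := hwf
    rw [PTm.toL_papp, PTm.toL_con_eq_lam, PTm.toL_contractum hts hwfts hv hwfv hlen]
    exact .beta hv.isValue_toL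
  | appL _ ih =>
    obtain _ | ⟨hwf, -⟩ := hwf
    rw [PTm.toL_papp, PTm.toL_papp]
    exact .appL (ih hwf hc.of_papp.1)
  | appR _ ih =>
    obtain _ | ⟨-, hwf⟩ := hwf
    rw [PTm.toL_papp, PTm.toL_papp]
    exact .appR (ih hwf hc.of_papp.2)
  | conArg hst =>
    obtain ⟨hcon⟩ := hc
    exact absurd hcon (PTm.Step.conArg hst).not_isConT
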